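/- arXiv:1110.5766 — 5 statements merged into one kernel-verified Lean document; each statement's English description precedes it below -/
import Mathlib

section
/- Let Ξ be a 1-separated set in a geometrically doubling quasi-metric space with quasi-triangle constant A₀, and let c > 0 and 0 < c' < c/A₀. Then there exists C < ∞ such that for all α, γ ∈ X: Σ_{β∈Ξ} exp(−c·d(α,β)) exp(−c·d(β,γ)) ≤ C exp(−c'·d(α,γ)). -/
/-- `S` is an `r`-separated subset for the quasi-distance `d`. -/
def Separated {X : Type*} (d : X → X → ℝ) (r : ℝ) (S : Set X) : Prop :=
  ∀ a ∈ S, ∀ b ∈ S, a ≠ b → r ≤ d a b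

/-- Geometric doubling with constant `N`. -/
def GeomDoubling {X : Type*} (d : X → X → ℝ) (N : ℕ) : Prop :=
  ∀ (x : X) (r : ℝ) (S : Finset X), (∀ y ∈ S, d x y < r) →
    (∀ a ∈ S, ∀ b ∈ S, a ≠ b → r / 2 < d a b) → S.card ≤ N

/-!
Write `ε = c - A c' > 0`. The quasi-triangle inequality
`c' d(α,γ) ≤ A c' d(α,β) + A c' d(β,γ)` gives
`e^{-c d(α,β)} e^{-c d(β,γ)} ≤ e^{-c' d(α,γ)} e^{-ε d(α,β)}`, so it suffices to bound
`Σ_{β ∈ Ξ} e^{-ε d(α,β)}` uniformly in `α`. Applying geometric doubling to a `q^k`-separated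
`q^k`-net and inducting on `k` shows that a `1`-separated set in a ball of radius `q^k`
(`1 < q < 2`) has at most `N^(k+1)` points; splitting `Ξ` into the shells
`q^k - 1 ≤ d(α,β) ≤ q^(k+1)` bounds the sum by `Σ_k N^(k+2) e^{ε (1 - q^k)}`, which converges
because `q^k` grows exponentially.
-/

open Real Finset Filter Topology

section QuasiMetric

variable {X : Type*} {d : X → X → ℝ} {N : ℕ}

theorem exists_subset_pairwise_lt_forall_exists_le
    (hsymm : ∀ x y, d x y = d y x) (hself : ∀ x, d x x = 0) {r : ℝ} (hr : 0 ≤ r)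
    (S : Finset X) :
    ∃ T ⊆ S, (T : Set X).Pairwise (fun a b => r < d a b) ∧ ∀ y ∈ S, ∃ t ∈ T, d t y ≤ r := by
  classical
  induction S using Finset.induction_on with
  | empty => exact ⟨∅, subset_refl _, by simp, by simp⟩
  | insert y S _ ih =>
    obtain ⟨T, hTS, hTsep, hTcov⟩ := ih
    by_cases hy : ∃ t ∈ T, d t y ≤ r
    · refine ⟨T, hTS.trans (subset_insert _ _), hTsep, ?_⟩
      simpa only [forall_mem_insert] using ⟨hy, hTcov⟩
    · push Not at hy
      refine ⟨insert y T, insert_subset_insert _ hTS, ?_, ?_⟩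
      · rw [coe_insert, Set.pairwise_insert]
        exact ⟨hTsep, fun b hb _ => ⟨hsymm y b ▸ hy b hb, hy b hb⟩⟩
      · simp only [forall_mem_insert, exists_mem_insert, hself, hr, true_or, true_and]
        exact fun z hz => Or.inr (hTcov z hz)

theorem card_le_pow_of_separated_of_forall_le
    (hsymm : ∀ x y, d x y = d y x) (hself : ∀ x, d x x = 0) (hdoub : GeomDoubling d N)
    {q : ℝ} (hq₁ : 1 < q) (hq₂ : q < 2) (k : ℕ) (x : X) (S : Finset X)
    (hS : Separated d 1 S) (hball : ∀ y ∈ S, d x y ≤ q ^ k) :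
    #S ≤ N ^ (k + 1) := by
  classical
  induction k generalizing x S with
  | zero =>
    refine (hdoub x q S (fun y hy => ?_) fun a ha b hb hab => ?_).trans (by simp)
    · linarith [hball y hy, pow_zero q]
    · linarith [hS a ha b hb hab]
  | succ k ih =>
    have hqk : 0 < q ^ k := by positivity
    obtain ⟨T, hTS, hTsep, hTcov⟩ :=
      exists_subset_pairwise_lt_forall_exists_le hsymm hself hqk.le S
    -- `q < 2` puts the ball of radius `q^(k+1)` inside the one of radius `2 q^k`
    have hT : #T ≤ N := by
      refine hdoub x (2 * q ^ k) T (fun y hy => ?_) fun a ha b hb hab => ?_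
      · nlinarith [hball y (hTS hy), pow_succ q k]
      · linarith [hTsep ha hb hab]
    have hcover : S ⊆ T.biUnion fun t => S.filter fun y => d t y ≤ q ^ k := by
      intro y hy
      obtain ⟨t, htT, hty⟩ := hTcov y hy
      exact mem_biUnion.mpr ⟨t, htT, mem_filter.mpr ⟨hy, hty⟩⟩
    have hfiber : ∀ t ∈ T, #(S.filter fun y => d t y ≤ q ^ k) ≤ N ^ (k + 1) := fun t _ =>
      ih t _ (fun a ha b hb => hS a (mem_filter.mp ha).1 b (mem_filter.mp hb).1)
        fun y hy => (mem_filter.mp hy).2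
    calc #S ≤ #T * N ^ (k + 1) :=
          (card_le_card hcover).trans (card_biUnion_le_card_mul _ _ _ hfiber)
      _ ≤ N * N ^ (k + 1) := Nat.mul_le_mul_right _ hT
      _ = N ^ (k + 1 + 1) := (pow_succ' _ _).symm

theorem summable_pow_mul_exp_neg_mul_pow (a : ℝ) {δ q : ℝ} (hδ : 0 < δ) (hq : 1 < q) :
    Summable fun k : ℕ => a ^ k * exp (-(δ * q ^ k)) := by
  have hratio : ∀ k : ℕ, a ^ (k + 1) * exp (-(δ * q ^ (k + 1)))
      = a * exp (-(δ * (q - 1) * q ^ k)) * (a ^ k * exp (-(δ * q ^ k))) := by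
    intro k
    rw [show -(δ * q ^ (k + 1)) = -(δ * (q - 1) * q ^ k) + -(δ * q ^ k) by ring, exp_add,
      pow_succ]
    ring
  have hlim : Tendsto (fun k : ℕ => |a| * exp (-(δ * (q - 1) * q ^ k))) atTop (𝓝 0) := by
    have hgrow := (tendsto_pow_atTop_atTop_of_one_lt hq).const_mul_atTop
      (mul_pos hδ (sub_pos.mpr hq))
    simpa using (tendsto_exp_atBot.comp (tendsto_neg_atBot_iff.mpr hgrow)).const_mul |a|
  refine summable_of_ratio_norm_eventually_le (r := 1 / 2) (by norm_num) ?_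
  filter_upwards [hlim.eventually_lt_const (by norm_num : (0 : ℝ) < 1 / 2)] with k hk
  rw [hratio, norm_mul, norm_mul, norm_eq_abs a, norm_of_nonneg (exp_pos _).le]
  exact mul_le_mul_of_nonneg_right hk.le (norm_nonneg _)

theorem exp_neg_mul_mul_exp_neg_mul_le {A : ℝ} (hnn : ∀ x y, 0 ≤ d x y)
    (htri : ∀ x y z, d x y ≤ A * (d x z + d z y)) {c c' : ℝ} (hc' : 0 ≤ c') (hcA : A * c' ≤ c)
    (α β γ : X) :
    exp (-(c * d α β)) * exp (-(c * d β γ))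
      ≤ exp (-(c' * d α γ)) * exp (-((c - A * c') * d α β)) := by
  rw [← exp_add, ← exp_add, exp_le_exp]
  nlinarith [mul_le_mul_of_nonneg_left (htri α γ β) hc', mul_le_mul_of_nonneg_right hcA (hnn β γ)]

theorem sum_exp_neg_mul_le_tsum (hnn : ∀ x y, 0 ≤ d x y) (hsymm : ∀ x y, d x y = d y x)
    (hself : ∀ x, d x x = 0) (hdoub : GeomDoubling d N) {q : ℝ} (hq₁ : 1 < q) (hq₂ : q < 2)
    {ε : ℝ} (hε : 0 < ε) (α : X) (S : Finset X) (hS : Separated d 1 S) :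
    ∑ y ∈ S, exp (-(ε * d α y)) ≤ ∑' k : ℕ, (N : ℝ) ^ (k + 2) * exp (ε * (1 - q ^ k)) := by
  classical
  have hshell : ∀ y, ∃ k : ℕ, q ^ k ≤ d α y + 1 ∧ d α y ≤ q ^ (k + 1) := fun y =>
    (exists_nat_pow_near (by linarith [hnn α y]) hq₁).imp fun _ hk => ⟨hk.1, by linarith [hk.2]⟩
  choose shell hshell using hshell
  have hsumm : Summable fun k : ℕ => (N : ℝ) ^ (k + 2) * exp (ε * (1 - q ^ k)) :=
    ((summable_pow_mul_exp_neg_mul_pow N hε hq₁).mul_left (N ^ 2 * exp ε)).congr fun k => by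
      rw [pow_add, mul_sub, mul_one, sub_eq_add_neg, exp_add]
      ring
  have hfiber : ∀ k, ∑ y ∈ S.filter (shell · = k), exp (-(ε * d α y))
      ≤ (N : ℝ) ^ (k + 2) * exp (ε * (1 - q ^ k)) := by
    intro k
    have hcard : #(S.filter (shell · = k)) ≤ N ^ (k + 2) :=
      card_le_pow_of_separated_of_forall_le hsymm hself hdoub hq₁ hq₂ (k + 1) α _
        (fun a ha b hb => hS a (mem_filter.mp ha).1 b (mem_filter.mp hb).1)
        fun y hy => (mem_filter.mp hy).2 ▸ (hshell y).2
    have hterm : ∀ y ∈ S.filter (shell · = k), exp (-(ε * d α y)) ≤ exp (ε * (1 - q ^ k)) := by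
      intro y hy
      have hqk := (mem_filter.mp hy).2 ▸ (hshell y).1
      exact exp_le_exp.mpr (by nlinarith)
    calc ∑ y ∈ S.filter (shell · = k), exp (-(ε * d α y))
        ≤ #(S.filter (shell · = k)) • exp (ε * (1 - q ^ k)) := sum_le_card_nsmul _ _ _ hterm
      _ ≤ (N : ℝ) ^ (k + 2) * exp (ε * (1 - q ^ k)) := by
        rw [nsmul_eq_mul]
        gcongr
        exact_mod_cast hcard
  calc ∑ y ∈ S, exp (-(ε * d α y))
      = ∑ k ∈ S.image shell, ∑ y ∈ S.filter (shell · = k), exp (-(ε * d α y)) :=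
        (sum_fiberwise_of_maps_to (fun y hy => mem_image_of_mem shell hy) _).symm
    _ ≤ ∑ k ∈ S.image shell, (N : ℝ) ^ (k + 2) * exp (ε * (1 - q ^ k)) :=
        sum_le_sum fun k _ => hfiber k
    _ ≤ ∑' k : ℕ, (N : ℝ) ^ (k + 2) * exp (ε * (1 - q ^ k)) :=
        hsumm.sum_le_tsum _ fun k _ => by positivity

end QuasiMetric

theorem exp_product_sum_bound_general {X : Type*} (d : X → X → ℝ) (A : ℝ) (N : ℕ)
    (hA : 1 ≤ A)
    (hnn : ∀ x y, 0 ≤ d x y)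
    (hsymm : ∀ x y, d x y = d y x)
    (hzero : ∀ x y, d x y = 0 ↔ x = y)
    (htri : ∀ x y z, d x y ≤ A * (d x z + d z y))
    (hdoub : GeomDoubling d N)
    (Ξ : Set X) (hΞ : Separated d 1 Ξ)
    (c c' : ℝ) (hc'pos : 0 < c') (hc' : c' < c / A) :
    ∃ C : ℝ, ∀ α γ : X,
      (∑' β : Ξ, Real.exp (-(c * d α β)) * Real.exp (-(c * d (β : X) γ)))
        ≤ C * Real.exp (-(c' * d α γ)) := by
  have hcA : A * c' < c := by
    rw [mul_comm]
    exact (lt_div_iff₀ (by linarith)).mp hc'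
  set C := ∑' k : ℕ, (N : ℝ) ^ (k + 2) * exp ((c - A * c') * (1 - (3 / 2 : ℝ) ^ k))
  have hC : 0 ≤ C := tsum_nonneg fun k => by positivity
  refine ⟨C, fun α γ => tsum_le_of_sum_le' (by positivity) fun F => ?_⟩
  have hF : Separated d 1 (F.map (Function.Embedding.subtype _) : Set X) := by
    intro a ha b hb
    obtain ⟨a, -, rfl⟩ := mem_map.mp ha
    obtain ⟨b, -, rfl⟩ := mem_map.mp hb
    exact hΞ a a.2 b b.2
  calc ∑ β ∈ F, exp (-(c * d α β)) * exp (-(c * d β γ))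
      ≤ ∑ β ∈ F, exp (-(c' * d α γ)) * exp (-((c - A * c') * d α β)) :=
        sum_le_sum fun β _ => exp_neg_mul_mul_exp_neg_mul_le hnn htri hc'pos.le hcA.le α β γ
    _ = exp (-(c' * d α γ)) *
          ∑ x ∈ F.map (Function.Embedding.subtype _), exp (-((c - A * c') * d α x)) := by
        rw [mul_sum, sum_map]
        rfl
    _ ≤ exp (-(c' * d α γ)) * C := by
        gcongr
        exact sum_exp_neg_mul_le_tsum hnn hsymm (fun x => (hzero x x).mpr rfl) hdoub
          (by norm_num) (by norm_num) (by linarith) α _ hF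
    _ = C * exp (-(c' * d α γ)) := mul_comm _ _

/-- convolution-type bound for sums of exponentials over a `1`-separated set. -/
theorem exp_product_sum_bound {X : Type*} (d : X → X → ℝ) (A : ℝ) (N : ℕ)
    (hA : 1 ≤ A)
    (hnn : ∀ x y, 0 ≤ d x y)
    (hsymm : ∀ x y, d x y = d y x)
    (hzero : ∀ x y, d x y = 0 ↔ x = y)
    (htri : ∀ x y z, d x y ≤ A * (d x z + d z y))
    (hdoub : GeomDoubling d N)
    (Ξ : Set X) (hΞ : Separated d 1 Ξ)
    (c c' : ℝ) (hc : 0 < c) (hc'pos : 0 < c') (hc' : c' < c / A) :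
    ∃ C : ℝ, ∀ α γ : X,
      (∑' β : Ξ, Real.exp (-(c * d α β)) * Real.exp (-(c * d (β : X) γ)))
        ≤ C * Real.exp (-(c' * d α γ)) :=
  exp_product_sum_bound_general d A N hA hnn hsymm hzero htri hdoub Ξ hΞ c c' hc'pos hc'
end

section
/- Let κₙ be the best constant such that d(α₀, αₙ) ≤ κₙ (d(α₀,α₁) + d(α₁,α₂) + … + d(α_{n-1},αₙ)) for all chains of n+1 points in X. Then κₙ ≤ A₀ · n^{log₂ A₀} for all n ≥ 1. -/
/-!
A quasi-triangle inequality applied at the midpoint of a chain gives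
`κ_{m+k} ≤ A₀ · max κ_m κ_k`, so doubling the length of a chain costs one factor `A₀`
and `κ_{2^j} ≤ A₀^j`. A chain of length `n` fits into one of length `2^j` with
`j = ⌈log₂ n⌉ ≤ 1 + log₂ n`, and `A₀^{log₂ n} = n^{log₂ A₀}`.
-/

open Finset Real

section ChainBound

variable {X : Type*}

/-- `ChainBound d n C` says that the best chain constant `κₙ` of `d` is at most `C`. -/
def ChainBound (d : X → X → ℝ) (n : ℕ) (C : ℝ) : Prop :=
  ∀ α : ℕ → X, d (α 0) (α n) ≤ C * ∑ i ∈ range n, d (α i) (α (i + 1))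

variable {d : X → X → ℝ}

theorem chainBound_one : ChainBound d 1 1 := by
  intro α
  simp

theorem ChainBound.mono (hnn : ∀ x y, 0 ≤ d x y) {n : ℕ} {C C' : ℝ} (h : ChainBound d n C)
    (hC : C ≤ C') : ChainBound d n C' := fun α =>
  (h α).trans (mul_le_mul_of_nonneg_right hC (sum_nonneg fun _ _ => hnn _ _))

theorem ChainBound.add {A : ℝ} (hA : 0 ≤ A) (htri : ∀ x y z, d x y ≤ A * (d x z + d z y))
    {m k : ℕ} {C : ℝ} (hm : ChainBound d m C) (hk : ChainBound d k C) :
    ChainBound d (m + k) (A * C) := by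
  intro α
  have hshift := hk (fun i => α (m + i))
  simp only [add_zero, ← add_assoc] at hshift
  calc d (α 0) (α (m + k)) ≤ A * (d (α 0) (α m) + d (α m) (α (m + k))) := htri _ _ _
    _ ≤ A * (C * ∑ i ∈ range m, d (α i) (α (i + 1))
          + C * ∑ i ∈ range k, d (α (m + i)) (α (m + i + 1))) := by
        gcongr
        exact hm α
    _ = A * C * ∑ i ∈ range (m + k), d (α i) (α (i + 1)) := by
        rw [sum_range_add]; ring

theorem chainBound_pow {A : ℝ} (hA : 1 ≤ A) (hnn : ∀ x y, 0 ≤ d x y)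
    (htri : ∀ x y z, d x y ≤ A * (d x z + d z y)) (j : ℕ) :
    ∀ n, 1 ≤ n → n ≤ 2 ^ j → ChainBound d n (A ^ j) := by
  induction j with
  | zero =>
    intro n h1 h2
    obtain rfl : n = 1 := by omega
    simpa using chainBound_one
  | succ j ih =>
    intro n h1 h2
    by_cases hsmall : n ≤ 2 ^ j
    · exact (ih n h1 hsmall).mono hnn (pow_le_pow_right₀ hA j.le_succ)
    · obtain ⟨k, rfl⟩ : ∃ k, n = 2 ^ j + k := ⟨n - 2 ^ j, by omega⟩
      have hk : k ≤ 2 ^ j := by rw [pow_succ] at h2; omega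
      rw [pow_succ']
      exact (ih _ Nat.one_le_two_pow le_rfl).add (by linarith) htri (ih k (by omega) hk)

end ChainBound

theorem Real.rpow_logb_comm {b x y : ℝ} (hx : 0 < x) (hy : 0 < y) :
    x ^ logb b y = y ^ logb b x := by
  rw [rpow_def_of_pos hx, rpow_def_of_pos hy, logb, logb]
  ring_nf

theorem pow_clog_two_le_mul_rpow_logb {A : ℝ} (hA : 1 ≤ A) {n : ℕ} (hn : 1 ≤ n) :
    A ^ Nat.clog 2 n ≤ A * (n : ℝ) ^ logb 2 A := by
  have hn0 : (0 : ℝ) < n := by exact_mod_cast hn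
  have hlog : 0 ≤ logb 2 (n : ℝ) := logb_nonneg one_lt_two (by exact_mod_cast hn)
  have hclog : (Nat.clog 2 n : ℝ) ≤ 1 + logb 2 n := by
    rw [← natCeil_logb_natCast, Nat.cast_ofNat]
    linarith [Nat.ceil_lt_add_one hlog]
  calc A ^ Nat.clog 2 n = A ^ (Nat.clog 2 n : ℝ) := (rpow_natCast A _).symm
    _ ≤ A ^ (1 + logb 2 n) := rpow_le_rpow_of_exponent_le hA hclog
    _ = A * (n : ℝ) ^ logb 2 A := by
        rw [rpow_add (by linarith), rpow_one, rpow_logb_comm (by linarith) hn0]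

theorem chain_constant_bound_general {X : Type*} (d : X → X → ℝ) (A : ℝ)
    (hA : 1 ≤ A)
    (hnn : ∀ x y, 0 ≤ d x y)
    (htri : ∀ x y z, d x y ≤ A * (d x z + d z y)) :
    ∀ n : ℕ, 1 ≤ n → ∀ α : ℕ → X,
      d (α 0) (α n) ≤ A * (n : ℝ) ^ (Real.logb 2 A) *
        ∑ j ∈ Finset.range n, d (α j) (α (j + 1)) := by
  intro n hn
  have hpow : ChainBound d n (A ^ Nat.clog 2 n) :=
    chainBound_pow hA hnn htri _ n hn (Nat.le_pow_clog one_lt_two n)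
  exact hpow.mono hnn (pow_clog_two_le_mul_rpow_logb hA hn)

/-- the best chain constant `κₙ` of a quasi-metric space satisfies
`κₙ ≤ A₀ · n^{log₂ A₀}`, i.e. every chain of `n+1` points satisfies the
corresponding generalized triangle inequality. -/
theorem chain_constant_bound {X : Type*} (d : X → X → ℝ) (A : ℝ)
    (hA : 1 ≤ A)
    (hnn : ∀ x y, 0 ≤ d x y)
    (hsymm : ∀ x y, d x y = d y x)
    (hzero : ∀ x y, d x y = 0 ↔ x = y)
    (htri : ∀ x y z, d x y ≤ A * (d x z + d z y)) :
    ∀ n : ℕ, 1 ≤ n → ∀ α : ℕ → X,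
      d (α 0) (α n) ≤ A * (n : ℝ) ^ (Real.logb 2 A) *
        ∑ j ∈ Finset.range n, d (α j) (α (j + 1)) :=
  chain_constant_bound_general d A hA hnn htri
end

section
/- Let μ be a doubling Borel measure on a quasi-metric space (X,d) with quasi-triangle constant A₀. For every x ∈ X and R > r > 0, at least one of the following holds: μ(B(x,R)) ≥ (1+ε)μ(B(x,r)) with ε = 1/C_μ(3A₀²), or the annulus B(x, R/(2A₀)) \ B(x, 2A₀r) is empty. -/
open MeasureTheory
open scoped ENNReal NNReal

/-!
If the annulus contains a point `z`, then with `s = d(x,z)` the ball `B(z, s/(2A₀))` lies in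
`B(x,R)` and misses `B(x,r)`, while `B(x,r) ⊆ B(z, 3A₀² · s/(2A₀))`. Doubling gives
`μ(B(x,r)) ≤ C_μ(3A₀²) μ(B(z, s/(2A₀)))`, and the two disjoint balls inside `B(x,R)` add up to
`(1 + ε) μ(B(x,r))`.
-/

section QuasiTriangle

variable {X : Type*} {d : X → X → ℝ} {A : ℝ}

theorem setOf_dist_lt_subset_of_quasi_triangle (htri : ∀ x y z, d x y ≤ A * (d x z + d z y))
    (hA : 0 < A) {x z : X} {ρ R : ℝ} (h : A * (d x z + ρ) ≤ R) :
    {y | d z y < ρ} ⊆ {y | d x y < R} := fun y (hy : d z y < ρ) =>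
  calc d x y ≤ A * (d x z + d z y) := htri x y z
    _ < A * (d x z + ρ) := by gcongr
    _ ≤ R := h

theorem disjoint_setOf_dist_lt_of_quasi_triangle (htri : ∀ x y z, d x y ≤ A * (d x z + d z y))
    (hsymm : ∀ x y, d x y = d y x) (hA : 0 < A) {x z : X} {r ρ : ℝ}
    (h : A * (r + ρ) ≤ d x z) :
    Disjoint {y | d x y < r} {y | d z y < ρ} := by
  refine Set.disjoint_left.2 fun y (hxy : d x y < r) (hzy : d z y < ρ) => ?_
  have : d x z < d x z :=
    calc d x z ≤ A * (d x y + d y z) := htri x z y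
      _ < A * (r + ρ) := by rw [hsymm y z]; gcongr
      _ ≤ d x z := h
  exact lt_irrefl _ this

end QuasiTriangle

theorem one_add_inv_mul_measure_le {X : Type*} [MeasurableSpace X] {μ : Measure X}
    {s t u : Set X} (hsu : s ⊆ u) (htu : t ⊆ u) (hst : Disjoint s t) (ht : MeasurableSet t)
    {C : ℝ≥0∞} (hC : μ s ≤ C * μ t) :
    (1 + C⁻¹) * μ s ≤ μ u :=
  calc (1 + C⁻¹) * μ s = μ s + μ s / C := by rw [add_mul, one_mul, ENNReal.div_eq_inv_mul]
    _ ≤ μ s + μ t := by gcongr; exact ENNReal.div_le_of_le_mul' hC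
    _ = μ (s ∪ t) := (measure_union hst ht).symm
    _ ≤ μ u := measure_mono (Set.union_subset hsu htu)

theorem doubling_dichotomy_general {X : Type*} [MeasurableSpace X]
    (d : X → X → ℝ) (A : ℝ) (μ : Measure X)
    (hA : 1 ≤ A)
    (hsymm : ∀ x y, d x y = d y x)
    (htri : ∀ x y z, d x y ≤ A * (d x z + d z y))
    (hballs : ∀ (x : X) (r : ℝ), MeasurableSet {y | d x y < r})
    (Cμ3 : ℝ≥0)
    -- `Cμ3` is a doubling constant for dilation by `3A₀²`
    (h3 : ∀ (x : X) (r : ℝ), 0 < r →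
      μ {y | d x y < 3 * A ^ 2 * r} ≤ (Cμ3 : ℝ≥0∞) * μ {y | d x y < r}) :
    ∀ (x : X) (r R : ℝ), 0 < r → r < R →
      (1 + (Cμ3 : ℝ≥0∞)⁻¹) * μ {y | d x y < r} ≤ μ {y | d x y < R} ∨
      {y | d x y < R / (2 * A)} \ {y | d x y < 2 * A * r} = ∅ := by
  intro x r R hr hrR
  refine or_iff_not_imp_right.2 fun hann => ?_
  have hA0 : 0 < A := by linarith
  obtain ⟨z, hzR, hzr⟩ := Set.nonempty_iff_ne_empty.2 hann
  replace hzR : 2 * A * d x z < R := by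
    have : d x z < R / (2 * A) := hzR
    rwa [lt_div_iff₀ (by positivity), mul_comm] at this
  replace hzr : 2 * A * r ≤ d x z := not_lt.1 hzr
  have hs : 0 < d x z := lt_of_lt_of_le (by positivity) hzr
  set ρ := d x z / (2 * A) with hρ
  have hAρ : A * ρ = d x z / 2 := by rw [hρ]; field_simp
  have hρ_pos : 0 < ρ := by rw [hρ]; positivity
  have hsmall : {y | d x y < r} ⊆ {y | d z y < 3 * A ^ 2 * ρ} :=
    setOf_dist_lt_subset_of_quasi_triangle htri hA0 <| by
      rw [hsymm z x, show 3 * A ^ 2 * ρ = 3 * A * (A * ρ) by ring, hAρ]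
      nlinarith [mul_le_mul_of_nonneg_right hA hs.le]
  refine one_add_inv_mul_measure_le (fun y (hy : d x y < r) => hy.trans hrR)
    (setOf_dist_lt_subset_of_quasi_triangle htri hA0 (by nlinarith))
    (disjoint_setOf_dist_lt_of_quasi_triangle htri hsymm hA0 (by linarith)) (hballs z ρ) ?_
  exact (measure_mono hsmall).trans (h3 z ρ hρ_pos)

/-- dichotomy for a doubling measure: either the measure of the bigger ball
grows by the factor `1 + ε` with `ε = 1/C_μ(3A₀²)`, or a suitable annulus is empty. -/
theorem doubling_dichotomy {X : Type*} [MeasurableSpace X]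
    (d : X → X → ℝ) (A : ℝ) (μ : Measure X)
    (hA : 1 ≤ A)
    (hnn : ∀ x y, 0 ≤ d x y)
    (hsymm : ∀ x y, d x y = d y x)
    (hzero : ∀ x y, d x y = 0 ↔ x = y)
    (htri : ∀ x y z, d x y ≤ A * (d x z + d z y))
    (hballs : ∀ (x : X) (r : ℝ), MeasurableSet {y | d x y < r})
    (hpos : ∀ (x : X) (r : ℝ), 0 < r → 0 < μ {y | d x y < r})
    (hfin : ∀ (x : X) (r : ℝ), 0 < r → μ {y | d x y < r} < ⊤)
    (Cμ3 : ℝ≥0) (hC : 0 < Cμ3)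
    -- `Cμ3` is a doubling constant for dilation by `3A₀²`
    (h3 : ∀ (x : X) (r : ℝ), 0 < r →
      μ {y | d x y < 3 * A ^ 2 * r} ≤ (Cμ3 : ℝ≥0∞) * μ {y | d x y < r}) :
    ∀ (x : X) (r R : ℝ), 0 < r → r < R →
      (1 + (Cμ3 : ℝ≥0∞)⁻¹) * μ {y | d x y < r} ≤ μ {y | d x y < R} ∨
      {y | d x y < R / (2 * A)} \ {y | d x y < 2 * A * r} = ∅ :=
  doubling_dichotomy_general d A μ hA hsymm htri hballs Cμ3 h3
end

section
/- The spline functions s^k_α satisfy the two-sided support bounds: 1_{B(x^k_α, (1/8)A₀^{-3}δ^k)}(x) ≤ s^k_α(x) ≤ 1_{B(x^k_α, 8A₀^5 δ^k)}(x), and the partition-of-unity property Σ_α s^k_α(x) = 1 for every x ∈ X, and interpolation s^k_α(x^k_β) = δ_{αβ}. -/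
/-!
Everything except the partition of unity is immediate: the ball inclusions make the event
`x ∈ Q̄^k_α(ω)` sure inside the inner ball and impossible outside the outer ball, and a centre
`x^k_β` lies in its own cube, so it lies in a second cube only on the null overlap event.
For the partition of unity, the events `x ∈ Q̄^k_β(ω)` cover `Ω` and are almost surely
disjoint; only the cubes whose centres lie in `B(x, 8A₀⁵δ^k)` can contain `x`, and by geometric
doubling there are finitely many of these `δ^k`-separated centres, so additivity of `ℙ` over a
finite family applies.
-/

open MeasureTheory
open scoped ENNReal

open Set

section Doubling

variable {X : Type*} {d : X → X → ℝ}

theorem exists_separated_subset_covering (hsymm : ∀ x y, d x y = d y x)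
    (hself : ∀ x, d x x = 0) (S : Finset X) {ρ : ℝ} (hρ : 0 ≤ ρ) :
    ∃ T ⊆ S, (T : Set X).Pairwise (fun a b => ρ < d a b) ∧
      ∀ y ∈ S, ∃ t ∈ T, d t y ≤ ρ := by
  classical
  obtain ⟨T, hT, hTmax⟩ := (S.powerset.filter fun T : Finset X =>
    (T : Set X).Pairwise (fun a b => ρ < d a b)).exists_maximal ⟨∅, by simp⟩
  rw [Finset.mem_filter, Finset.mem_powerset] at hT
  refine ⟨T, hT.1, hT.2, fun y hy => ?_⟩
  by_cases hyT : y ∈ T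
  · exact ⟨y, hyT, (hself y).trans_le hρ⟩
  by_contra! hfar
  have hins : insert y T ∈ S.powerset.filter
      fun T : Finset X => (T : Set X).Pairwise (fun a b => ρ < d a b) := by
    rw [Finset.mem_filter, Finset.mem_powerset, Finset.coe_insert]
    refine ⟨Finset.insert_subset hy hT.1, hT.2.insert fun b hb _ => ⟨?_, hfar b hb⟩⟩
    rw [hsymm]
    exact hfar b hb
  exact hyT (hTmax hins (Finset.subset_insert y T) (Finset.mem_insert_self y T))

namespace GeomDoubling

variable {N : ℕ}

/-- A maximal `r/2`-separated subset has at most `N` points, and the balls of radius `3r/4`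
about them cover; induct on `m`. -/
theorem card_le_pow (hdoub : GeomDoubling d N) (hnn : ∀ x y, 0 ≤ d x y)
    (hsymm : ∀ x y, d x y = d y x) (hself : ∀ x, d x x = 0) (m : ℕ) {x : X} {r : ℝ}
    {S : Finset X}
    (hball : ∀ y ∈ S, d x y < r)
    (hsep : (S : Set X).Pairwise fun a b => 1 / 2 * (3 / 4) ^ m * r < d a b) :
    S.card ≤ N ^ (m + 1) := by
  classical
  induction m generalizing x r S with
  | zero =>
    simpa using hdoub x r S hball fun a ha b hb hab => by
      simpa [div_eq_inv_mul] using hsep ha hb hab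
  | succ m ih =>
    rcases S.eq_empty_or_nonempty with rfl | ⟨y₀, hy₀⟩
    · simp
    have hr : 0 < r := (hnn x y₀).trans_lt (hball y₀ hy₀)
    obtain ⟨T, hTS, hTsep, hTcov⟩ :=
      exists_separated_subset_covering hsymm hself S (half_pos hr).le
    have hTcard : T.card ≤ N :=
      hdoub x r T (fun y hy => hball y (hTS hy)) fun a ha b hb hab => hTsep ha hb hab
    have hpiece : ∀ t ∈ T, (S.filter fun y => d t y ≤ r / 2).card ≤ N ^ (m + 1) := by
      intro t _
      refine ih (x := t) (r := 3 / 4 * r) (fun y hy => ?_) fun a ha b hb hab => ?_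
      · linarith [(Finset.mem_filter.mp hy).2]
      · have := hsep (Finset.mem_filter.mp ha).1 (Finset.mem_filter.mp hb).1 hab
        linarith [show 1 / 2 * (3 / 4 : ℝ) ^ (m + 1) * r = 1 / 2 * (3 / 4) ^ m * (3 / 4 * r) by
          ring]
    have hScov : S ⊆ T.biUnion fun t => S.filter fun y => d t y ≤ r / 2 := by
      intro y hy
      obtain ⟨t, htT, hty⟩ := hTcov y hy
      exact Finset.mem_biUnion.mpr ⟨t, htT, Finset.mem_filter.mpr ⟨hy, hty⟩⟩
    calc S.card ≤ ∑ t ∈ T, (S.filter fun y => d t y ≤ r / 2).card :=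
          (Finset.card_le_card hScov).trans Finset.card_biUnion_le
      _ ≤ T.card * N ^ (m + 1) := Finset.sum_le_card_nsmul _ _ _ hpiece
      _ ≤ N * N ^ (m + 1) := Nat.mul_le_mul_right _ hTcard
      _ = N ^ (m + 2) := by ring

theorem finite_of_separated (hdoub : GeomDoubling d N) (hnn : ∀ x y, 0 ≤ d x y)
    (hsymm : ∀ x y, d x y = d y x) (hself : ∀ x, d x x = 0) {x : X} {r ε : ℝ} (hε : 0 < ε)
    {S : Set X}
    (hball : ∀ y ∈ S, d x y < r) (hsep : S.Pairwise fun a b => ε ≤ d a b) : S.Finite := by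
  have hlim := ((tendsto_pow_atTop_nhds_zero_of_lt_one (by norm_num : (0 : ℝ) ≤ 3 / 4)
    (by norm_num)).const_mul (1 / 2)).mul_const r
  rw [mul_zero, zero_mul] at hlim
  obtain ⟨m, hm⟩ := (hlim.eventually (gt_mem_nhds hε)).exists
  refine not_infinite.mp fun hinf => ?_
  obtain ⟨F, hFS, hFcard⟩ := hinf.exists_subset_card_eq (N ^ (m + 1) + 1)
  have := card_le_pow hdoub hnn hsymm hself m (S := F) (fun y hy => hball y (hFS hy))
    fun a ha b hb hab => hm.trans_le (hsep (hFS ha) (hFS hb) hab)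
  omega

theorem finite_of_separated_centers (hdoub : GeomDoubling d N) (hnn : ∀ x y, 0 ≤ d x y)
    (hsymm : ∀ x y, d x y = d y x) (hself : ∀ x, d x x = 0) {ι : Type*} {c : ι → X}
    {ε : ℝ} (hε : 0 < ε) (hsep : Pairwise fun i j => ε ≤ d (c i) (c j)) {x : X} {r : ℝ}
    {I : Set ι} (hball : ∀ i ∈ I, d x (c i) < r) : I.Finite := by
  have hinj : InjOn c I := fun i _ j _ hij => by
    by_contra hne
    exact hε.not_ge (by simpa [hij, hself] using hsep hne)
  refine Finite.of_finite_image (hdoub.finite_of_separated hnn hsymm hself hε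
    (forall_mem_image.2 hball) ?_) hinj
  rintro _ ⟨i, -, rfl⟩ _ ⟨j, -, rfl⟩ hij
  exact hsep fun h => hij (h ▸ rfl)

end GeomDoubling

end Doubling

theorem tsum_measure_toReal_eq_one_of_cover {ι Ω : Type*} [MeasurableSpace Ω]
    (P : Measure Ω) [IsProbabilityMeasure P] (E : ι → Set Ω)
    (hfin : {i | (E i).Nonempty}.Finite) (hmeas : ∀ i, NullMeasurableSet (E i) P)
    (hdisj : Pairwise fun i j => AEDisjoint P (E i) (E j)) (hcover : ∀ ω, ∃ i, ω ∈ E i) :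
    ∑' i, (P (E i)).toReal = 1 := by
  have hvanish : ∀ i ∉ hfin.toFinset, (P (E i)).toReal = 0 := by
    intro i hi
    rw [Finite.mem_toFinset, mem_ofPred_eq, not_nonempty_iff_eq_empty] at hi
    simp [hi]
  have hunion : ⋃ i ∈ hfin.toFinset, E i = univ :=
    eq_univ_of_forall fun ω =>
      let ⟨i, hi⟩ := hcover ω
      mem_biUnion (hfin.mem_toFinset.mpr ⟨ω, hi⟩) hi
  rw [tsum_eq_sum hvanish, ← ENNReal.toReal_sum fun i _ => measure_ne_top P _,
    ← measure_biUnion_finset₀ (fun i _ j _ hij => hdisj hij) fun i _ => hmeas i, hunion,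
    measure_univ, ENNReal.toReal_one]

theorem spline_basic_properties_general {X Ω : Type*} [MeasurableSpace Ω]
    (d : X → X → ℝ) (A δ : ℝ) (N : ℕ)
    (hA : 1 ≤ A)
    (hnn : ∀ x y, 0 ≤ d x y)
    (hsymm : ∀ x y, d x y = d y x)
    (hzero : ∀ x y, d x y = 0 ↔ x = y)
    (hdoub : GeomDoubling d N)
    (hδ : 0 < δ)
    (P : Measure Ω) [IsProbabilityMeasure P]
    (ι : ℤ → Type*) (center : ∀ k, ι k → X) (Q : ∀ k, ι k → Ω → Set X)
    -- measurability of the events defining the splines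
    (hmeas : ∀ (k : ℤ) (α : ι k) (x : X), MeasurableSet {ω | x ∈ Q k α ω})
    -- the centres of generation `k` are `δ^k`-separated
    (hsep : ∀ (k : ℤ) (α β : ι k), α ≠ β → δ ^ k ≤ d (center k α) (center k β))
    -- the closed cubes of generation `k` cover `X`
    (hcover : ∀ (k : ℤ) (ω : Ω) (x : X), ∃ α, x ∈ Q k α ω)
    -- comparability of cubes with balls
    (hin : ∀ (k : ℤ) (α : ι k) (ω : Ω) (y : X),
      d (center k α) y < (1 / 8) * A ^ (-3 : ℤ) * δ ^ k → y ∈ Q k α ω)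
    (hout : ∀ (k : ℤ) (α : ι k) (ω : Ω) (y : X),
      y ∈ Q k α ω → d (center k α) y < 8 * A ^ 5 * δ ^ k)
    -- overlaps of distinct cubes of the same generation have probability zero
    (hdisj : ∀ (k : ℤ) (x : X),
      P {ω | ∃ α β, α ≠ β ∧ x ∈ Q k α ω ∧ x ∈ Q k β ω} = 0) :
    ∀ (k : ℤ) (α : ι k) (x : X),
      -- lower indicator bound: `s^k_α = 1` on `B(x^k_α, (1/8)A₀⁻³δ^k)`
      (d (center k α) x < (1 / 8) * A ^ (-3 : ℤ) * δ ^ k →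
        (P {ω | x ∈ Q k α ω}).toReal = 1) ∧
      -- upper indicator bound: `s^k_α = 0` outside `B(x^k_α, 8A₀⁵δ^k)`
      (8 * A ^ 5 * δ ^ k ≤ d (center k α) x → (P {ω | x ∈ Q k α ω}).toReal = 0) ∧
      -- partition of unity: `Σ_α s^k_α(x) = 1`
      (∑' β : ι k, (P {ω | x ∈ Q k β ω}).toReal) = 1 ∧
      -- interpolation: `s^k_α(x^k_β) = δ_{αβ}`
      (∀ β : ι k,
        (α = β → (P {ω | center k β ∈ Q k α ω}).toReal = 1) ∧
        (α ≠ β → (P {ω | center k β ∈ Q k α ω}).toReal = 0)) := by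
  have hself : ∀ x, d x x = 0 := fun x => (hzero x x).mpr rfl
  have hδk : ∀ k : ℤ, 0 < δ ^ k := fun k => zpow_pos hδ k
  have hinner_pos : ∀ k : ℤ, 0 < 1 / 8 * A ^ (-3 : ℤ) * δ ^ k := fun k => by
    have := hδk k; have := zero_lt_one.trans_le hA; positivity
  have hlow : ∀ k (α : ι k) x, d (center k α) x < 1 / 8 * A ^ (-3 : ℤ) * δ ^ k →
      (P {ω | x ∈ Q k α ω}).toReal = 1 := fun k α x hx => by
    rw [show {ω | x ∈ Q k α ω} = univ from eq_univ_of_forall fun ω => hin k α ω x hx,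
      measure_univ, ENNReal.toReal_one]
  have hcenter_mem : ∀ k (β : ι k) ω, center k β ∈ Q k β ω := fun k β ω =>
    hin k β ω _ (by rw [hself]; exact hinner_pos k)
  intro k α x
  refine ⟨hlow k α x, fun hx => ?_, ?_, fun β => ⟨?_, fun hαβ => ?_⟩⟩
  · rw [show {ω | x ∈ Q k α ω} = ∅ from
      eq_empty_of_forall_notMem fun ω h => (hout k α ω x h).not_ge hx,
      measure_empty, ENNReal.toReal_zero]
  · have hfin : {β | ∃ ω, x ∈ Q k β ω}.Finite :=
      hdoub.finite_of_separated_centers hnn hsymm hself (hδk k) (fun β γ => hsep k β γ)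
        fun β ⟨ω, hω⟩ => by simpa [hsymm] using hout k β ω x hω
    exact tsum_measure_toReal_eq_one_of_cover P (fun β => {ω | x ∈ Q k β ω}) hfin
      (fun β => (hmeas k β x).nullMeasurableSet)
      (fun β γ hβγ =>
        measure_mono_null (fun ω hω => by exact ⟨β, γ, hβγ, hω⟩) (hdisj k x))
      (fun ω => hcover k ω x)
  · rintro rfl
    exact hlow k α _ (by rw [hself]; exact hinner_pos k)
  · have hnull : P {ω | center k β ∈ Q k α ω} = 0 :=
      measure_mono_null (fun ω hω => by exact ⟨α, β, hαβ, hω, hcenter_mem k β ω⟩)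
        (hdisj k _)
    rw [hnull, ENNReal.toReal_zero]

/-- the splines `s^k_α(x) = ℙ_ω(x ∈ Q̄^k_α(ω))` satisfy the two-sided
support bounds, the partition of unity property, and the interpolation property. -/
theorem spline_basic_properties {X Ω : Type*} [MeasurableSpace Ω]
    (d : X → X → ℝ) (A δ : ℝ) (N : ℕ)
    (hA : 1 ≤ A)
    (hnn : ∀ x y, 0 ≤ d x y)
    (hsymm : ∀ x y, d x y = d y x)
    (hzero : ∀ x y, d x y = 0 ↔ x = y)
    (htri : ∀ x y z, d x y ≤ A * (d x z + d z y))
    (hdoub : GeomDoubling d N)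
    (hδ : 0 < δ) (hδA : δ ≤ 1 / (1000 * A ^ 10))
    (P : Measure Ω) [IsProbabilityMeasure P]
    (ι : ℤ → Type*) (center : ∀ k, ι k → X) (Q : ∀ k, ι k → Ω → Set X)
    -- measurability of the events defining the splines
    (hmeas : ∀ (k : ℤ) (α : ι k) (x : X), MeasurableSet {ω | x ∈ Q k α ω})
    -- the centres of generation `k` are `δ^k`-separated
    (hsep : ∀ (k : ℤ) (α β : ι k), α ≠ β → δ ^ k ≤ d (center k α) (center k β))
    -- the closed cubes of generation `k` cover `X`
    (hcover : ∀ (k : ℤ) (ω : Ω) (x : X), ∃ α, x ∈ Q k α ω)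
    -- comparability of cubes with balls
    (hin : ∀ (k : ℤ) (α : ι k) (ω : Ω) (y : X),
      d (center k α) y < (1 / 8) * A ^ (-3 : ℤ) * δ ^ k → y ∈ Q k α ω)
    (hout : ∀ (k : ℤ) (α : ι k) (ω : Ω) (y : X),
      y ∈ Q k α ω → d (center k α) y < 8 * A ^ 5 * δ ^ k)
    -- overlaps of distinct cubes of the same generation have probability zero
    (hdisj : ∀ (k : ℤ) (x : X),
      P {ω | ∃ α β, α ≠ β ∧ x ∈ Q k α ω ∧ x ∈ Q k β ω} = 0) :
    ∀ (k : ℤ) (α : ι k) (x : X),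
      -- lower indicator bound: `s^k_α = 1` on `B(x^k_α, (1/8)A₀⁻³δ^k)`
      (d (center k α) x < (1 / 8) * A ^ (-3 : ℤ) * δ ^ k →
        (P {ω | x ∈ Q k α ω}).toReal = 1) ∧
      -- upper indicator bound: `s^k_α = 0` outside `B(x^k_α, 8A₀⁵δ^k)`
      (8 * A ^ 5 * δ ^ k ≤ d (center k α) x → (P {ω | x ∈ Q k α ω}).toReal = 0) ∧
      -- partition of unity: `Σ_α s^k_α(x) = 1`
      (∑' β : ι k, (P {ω | x ∈ Q k β ω}).toReal) = 1 ∧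
      -- interpolation: `s^k_α(x^k_β) = δ_{αβ}`
      (∀ β : ι k,
        (α = β → (P {ω | center k β ∈ Q k α ω}).toReal = 1) ∧
        (α ≠ β → (P {ω | center k β ∈ Q k α ω}).toReal = 0)) :=
  spline_basic_properties_general d A δ N hA hnn hsymm hzero hdoub hδ P ι center Q hmeas hsep hcover
    hin hout hdisj
end

section
/- The splines are Hölder-continuous: there exist constants C and η > 0 (depending only on the geometric constants) such that |s^k_α(x) − s^k_α(y)| ≤ C (d(x,y)/δ^k)^η for all x, y ∈ X and all k, α. -/
open MeasureTheory

/-!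
If `x ∈ Q̄_α(ω)` but `y ∉ Q̄_α(ω)`, then `y` is a point outside the open cube `Q̃_α(ω)` within
distance `d(x, y)` of `x`, so `ω` lies in the boundary layer of width `2 d(x, y)` around `x`.
Hence `s_α(x) - s_α(y)` is at most the probability of that layer, which the small boundary layer
property bounds by `C₀ (2 d(x, y) / δ^k)^η`.
-/

namespace RandomDyadicCubes

variable {X Ω ι : Type*}

/-- The event `x ∈ ⋃_α ∂_ε Q_α(ω)`, with the width `ε δ^k` written as `r`. -/
def boundaryLayer (d : X → X → ℝ) (Qbar Qopen : ι → Ω → Set X) (x : X) (r : ℝ) : Set Ω :=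
  {ω | ∃ α, x ∈ Qbar α ω ∧ ∃ z, z ∉ Qopen α ω ∧ d x z < r}

variable {d : X → X → ℝ} {Qbar Qopen : ι → Ω → Set X} {u v : X} {r : ℝ}

theorem sdiff_subset_boundaryLayer (hsub : ∀ α ω, Qopen α ω ⊆ Qbar α ω) (huv : d u v < r)
    (α : ι) :
    {ω | u ∈ Qbar α ω} \ {ω | v ∈ Qbar α ω} ⊆ boundaryLayer d Qbar Qopen u r :=
  fun ω ⟨hu, hv⟩ => ⟨α, hu, v, fun hv' => hv (hsub α ω hv'), huv⟩

variable [MeasurableSpace Ω]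

def spline (P : Measure Ω) (Qbar : ι → Ω → Set X) (α : ι) (x : X) : ℝ :=
  P.real {ω | x ∈ Qbar α ω}

variable {P : Measure Ω} [IsFiniteMeasure P]

theorem spline_sub_spline_le (hsub : ∀ α ω, Qopen α ω ⊆ Qbar α ω) (huv : d u v < r) (α : ι) :
    spline P Qbar α u - spline P Qbar α v ≤ P.real (boundaryLayer d Qbar Qopen u r) :=
  le_trans le_measureReal_sdiff (measureReal_mono (sdiff_subset_boundaryLayer hsub huv α))

theorem abs_spline_sub_spline_le (hsub : ∀ α ω, Qopen α ω ⊆ Qbar α ω) {B : ℝ}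
    (hB : ∀ x, P.real (boundaryLayer d Qbar Qopen x r) ≤ B) (huv : d u v < r) (hvu : d v u < r)
    (α : ι) :
    |spline P Qbar α u - spline P Qbar α v| ≤ B :=
  abs_sub_le_iff.2
    ⟨(spline_sub_spline_le hsub huv α).trans (hB u),
      (spline_sub_spline_le hsub hvu α).trans (hB v)⟩

end RandomDyadicCubes

open RandomDyadicCubes

theorem spline_holder_continuity_general {X Ω : Type*} [MeasurableSpace Ω]
    (d : X → X → ℝ) (δ : ℝ)
    (hnn : ∀ x y, 0 ≤ d x y)
    (hsymm : ∀ x y, d x y = d y x)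
    (hzero : ∀ x y, d x y = 0 ↔ x = y)
    (hδ : 0 < δ)
    (P : Measure Ω) [IsProbabilityMeasure P]
    (ι : ℤ → Type*)
    (Qbar Qopen : ∀ k, ι k → Ω → Set X)    -- closed and open random dyadic cubes
    (hsub : ∀ (k : ℤ) (α : ι k) (ω : Ω), Qopen k α ω ⊆ Qbar k α ω)
    (η C₀ : ℝ) (hη : 0 < η) (hC₀ : 0 ≤ C₀)
    -- small boundary layer property:
    -- `ℙ_ω(x ∈ ∪_α ∂_ε Q^k_α(ω)) ≤ C₀ ε^η`, where
    -- `∂_ε Q^k_α(ω) = {y ∈ Q̄^k_α(ω) : d(y, (Q̃^k_α(ω))ᶜ) < ε δ^k}`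
    (hSB : ∀ (k : ℤ) (x : X) (ε : ℝ), 0 < ε →
      P {ω | ∃ α, x ∈ Qbar k α ω ∧ ∃ z, z ∉ Qopen k α ω ∧ d x z < ε * δ ^ k}
        ≤ ENNReal.ofReal (C₀ * ε ^ η)) :
    ∃ C : ℝ, ∀ (k : ℤ) (α : ι k) (x y : X),
      |(P {ω | x ∈ Qbar k α ω}).toReal - (P {ω | y ∈ Qbar k α ω}).toReal|
        ≤ C * (d x y / δ ^ k) ^ η := by
  refine ⟨C₀ * 2 ^ η, fun k α x y => ?_⟩
  rcases (hnn x y).eq_or_lt with hxy | hxy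
  · obtain rfl := (hzero x y).1 hxy.symm
    simp [← hxy, Real.zero_rpow hη.ne']
  set ε := 2 * (d x y / δ ^ k)
  have hδk : 0 < δ ^ k := zpow_pos hδ k
  have hwidth : ε * δ ^ k = 2 * d x y := by
    rw [mul_assoc, div_mul_cancel₀ _ hδk.ne']
  have hlayer (u : X) : P.real (boundaryLayer d (Qbar k) (Qopen k) u (ε * δ ^ k)) ≤ C₀ * ε ^ η :=
    ENNReal.toReal_le_of_le_ofReal (by positivity) (hSB k u ε (by positivity))
  calc |spline P (Qbar k) α x - spline P (Qbar k) α y|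
      ≤ C₀ * ε ^ η :=
        abs_spline_sub_spline_le (hsub k) hlayer (by linarith) (by rw [hsymm]; linarith) α
    _ = C₀ * 2 ^ η * (d x y / δ ^ k) ^ η := by
        rw [Real.mul_rpow zero_le_two (by positivity), mul_assoc]

/-- Hölder-continuity of the splines `s^k_α(x) = ℙ_ω(x ∈ Q̄^k_α(ω))`,
deduced from the small boundary layer property of the random dyadic cubes. -/
theorem spline_holder_continuity {X Ω : Type*} [MeasurableSpace Ω]
    (d : X → X → ℝ) (A δ : ℝ)
    (hA : 1 ≤ A)
    (hnn : ∀ x y, 0 ≤ d x y)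
    (hsymm : ∀ x y, d x y = d y x)
    (hzero : ∀ x y, d x y = 0 ↔ x = y)
    (htri : ∀ x y z, d x y ≤ A * (d x z + d z y))
    (hδ : 0 < δ) (hδA : δ ≤ 1 / (1000 * A ^ 10))
    (P : Measure Ω) [IsProbabilityMeasure P]
    (ι : ℤ → Type*)
    (Qbar Qopen : ∀ k, ι k → Ω → Set X)    -- closed and open random dyadic cubes
    (hsub : ∀ (k : ℤ) (α : ι k) (ω : Ω), Qopen k α ω ⊆ Qbar k α ω)
    (η C₀ : ℝ) (hη : 0 < η) (hC₀ : 0 ≤ C₀)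
    -- small boundary layer property:
    -- `ℙ_ω(x ∈ ∪_α ∂_ε Q^k_α(ω)) ≤ C₀ ε^η`, where
    -- `∂_ε Q^k_α(ω) = {y ∈ Q̄^k_α(ω) : d(y, (Q̃^k_α(ω))ᶜ) < ε δ^k}`
    (hSB : ∀ (k : ℤ) (x : X) (ε : ℝ), 0 < ε →
      P {ω | ∃ α, x ∈ Qbar k α ω ∧ ∃ z, z ∉ Qopen k α ω ∧ d x z < ε * δ ^ k}
        ≤ ENNReal.ofReal (C₀ * ε ^ η)) :
    ∃ C : ℝ, ∀ (k : ℤ) (α : ι k) (x y : X),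
      |(P {ω | x ∈ Qbar k α ω}).toReal - (P {ω | y ∈ Qbar k α ω}).toReal|
        ≤ C * (d x y / δ ^ k) ^ η :=
  spline_holder_continuity_general d δ hnn hsymm hzero hδ P ι Qbar Qopen hsub η C₀ hη hC₀ hSB
end
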